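/- arXiv:1603.08476 — 5 statements merged into one kernel-verified Lean document; each statement's English description precedes it below -/
import Mathlib

section
/- For every real E with |E| < 2, the Stieltjes transform of the semicircle law converges on the real axis: lim_{ε↓0} ∫_{−2}^{2} ρ_sc(λ)/(E − iε − λ) dλ = (E + i√(4−E²))/2. -/
/-!
For `0 < ‖s‖ < 1` the substitution `l = 2 cos θ` turns `∫ ρ_sc(l) / (s + s⁻¹ - l) dl` into
`(2/π) ∫₀^π sin θ · s sin θ / (1 - 2 s cos θ + s²) dθ`. Expanding the Chebyshev generating
function `s sin θ / (1 - 2 s cos θ + s²) = ∑ sⁿ⁺¹ sin ((n+1) θ)` and integrating term by term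
against `sin θ`, orthogonality kills every term but the first, so the Stieltjes transform at
`s + s⁻¹` is `s`.

Every `z` off the real axis is `s + s⁻¹` for such an `s`, lying in the upper half-plane when
`Im z < 0`. The limit `s₀ = (E + i√(4 - E²))/2` and its conjugate are the roots of `X² - E X + 1`,
so `(s - s₀)(s - s̄₀) = s (z - E)`; as `‖s - s̄₀‖ ≥ Im s₀`, this gives
`‖m(z) - s₀‖ ≤ 2 ‖z - E‖ / √(4 - E²)` for the Stieltjes transform `m`.
-/

open Real Set MeasureTheory intervalIntegral ComplexConjugate

noncomputable def semicircleDensity (l : ℝ) : ℝ := √(4 - l ^ 2) / (2 * π)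

noncomputable def semicircleStieltjes (z : ℂ) : ℂ :=
  ∫ l in (-2 : ℝ)..2, (semicircleDensity l : ℂ) / (z - l)

theorem integral_neg_two_two_eq_integral_comp_two_mul_cos {F : Type*} [NormedAddCommGroup F]
    [NormedSpace ℝ F] (g : ℝ → F) :
    ∫ l in (-2 : ℝ)..2, g l = ∫ θ in (0 : ℝ)..π, (2 * sin θ) • g (2 * cos θ) := by
  have himage : (fun θ => 2 * cos θ) '' Icc 0 π = Icc (-2) 2 := by
    rw [← image_image (2 * ·) cos, bijOn_cos.image_eq,
      image_mul_left_Icc (by norm_num) (by norm_num)]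
    norm_num
  have hderiv : ∀ θ ∈ Icc 0 π, HasDerivWithinAt (fun θ => 2 * cos θ) (-(2 * sin θ)) (Icc 0 π) θ :=
    fun θ _ => by simpa using ((hasDerivAt_cos θ).const_mul 2).hasDerivWithinAt
  have hinj : InjOn (fun θ => 2 * cos θ) (Icc 0 π) :=
    fun x hx y hy h => injOn_cos hx hy (by simpa using h)
  rw [integral_of_le (by norm_num), integral_of_le pi_pos.le, ← integral_Icc_eq_integral_Ioc,
    ← integral_Icc_eq_integral_Ioc, ← himage,
    integral_image_eq_integral_abs_deriv_smul measurableSet_Icc hderiv hinj]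
  refine setIntegral_congr_fun measurableSet_Icc fun θ hθ => ?_
  rw [abs_neg, abs_of_nonneg (by linarith [sin_nonneg_of_mem_Icc hθ])]

theorem integral_cos_nat_mul (k : ℕ) :
    ∫ θ in (0 : ℝ)..π, cos (k * θ) = if k = 0 then π else 0 := by
  split_ifs with hk
  · simp [hk]
  · rw [integral_comp_mul_left cos (by exact_mod_cast hk), integral_cos, sin_nat_mul_pi]
    simp

theorem integral_sin_mul_sin_nat_succ_mul (n : ℕ) :
    ∫ θ in (0 : ℝ)..π, sin θ * sin ((n + 1) * θ) = if n = 0 then π / 2 else 0 := by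
  have hprod : ∀ θ : ℝ,
      sin θ * sin ((n + 1) * θ) = (cos (n * θ) - cos ((n + 2 : ℕ) * θ)) / 2 := fun θ => by
    rw [cos_sub_cos]
    push_cast
    ring_nf
    rw [sin_neg]
    ring
  simp_rw [hprod]
  rw [intervalIntegral.integral_div,
    intervalIntegral.integral_sub ((by fun_prop : Continuous _).intervalIntegrable _ _)
      ((by fun_prop : Continuous _).intervalIntegrable _ _),
    integral_cos_nat_mul, integral_cos_nat_mul]
  split_ifs <;> simp_all

theorem hasSum_pow_succ_of_norm_lt_one {K : Type*} [NormedDivisionRing K] {x : K}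
    (hx : ‖x‖ < 1) :
    HasSum (fun n : ℕ => x ^ (n + 1)) (x / (1 - x)) := by
  simpa [pow_succ', div_eq_mul_inv] using (hasSum_geometric_of_norm_lt_one hx).mul_left x

theorem one_sub_ne_zero_of_norm_lt_one {K : Type*} [NormedDivisionRing K] {x : K}
    (hx : ‖x‖ < 1) : 1 - x ≠ 0 :=
  sub_ne_zero.mpr fun h => by simp [← h] at hx

theorem hasSum_pow_succ_mul_sin_nat_succ_mul {s : ℂ} (hs : ‖s‖ < 1) (θ : ℝ) :
    HasSum (fun n : ℕ => s ^ (n + 1) * (sin ((n + 1) * θ) : ℂ))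
      (s * sin θ / (1 - 2 * s * cos θ + s ^ 2)) := by
  set e := Complex.exp (θ * Complex.I)
  have he0 : e ≠ 0 := Complex.exp_ne_zero _
  have hpow : ∀ n : ℕ, Complex.exp ((n * θ : ℝ) * Complex.I) = e ^ n := fun n => by
    rw [← Complex.exp_nat_mul]; push_cast; ring_nf
  have hsin : ∀ n : ℕ, (sin (n * θ) : ℂ) = (e⁻¹ ^ n - e ^ n) * Complex.I / 2 := fun n => by
    rw [Complex.ofReal_sin, inv_pow, ← hpow, ← Complex.exp_neg, ← neg_mul]
    linear_combination Complex.two_sin _ / 2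
  have hcos : (cos θ : ℂ) = (e + e⁻¹) / 2 := by
    rw [Complex.ofReal_cos, ← Complex.exp_neg, ← neg_mul, ← Complex.two_cos]
    ring
  have he : ‖s * e‖ < 1 := by rwa [norm_mul, Complex.norm_exp_ofReal_mul_I, mul_one]
  have he' : ‖s * e⁻¹‖ < 1 := by
    rwa [norm_mul, norm_inv, Complex.norm_exp_ofReal_mul_I, inv_one, mul_one]
  have hne := one_sub_ne_zero_of_norm_lt_one he
  have hne' := one_sub_ne_zero_of_norm_lt_one he'
  have hsum := hasSum_pow_succ_of_norm_lt_one he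
  have hsum' := hasSum_pow_succ_of_norm_lt_one he'
  have hterm : (fun n : ℕ => s ^ (n + 1) * (sin ((n + 1) * θ) : ℂ)) =
      fun n => ((s * e⁻¹) ^ (n + 1) - (s * e) ^ (n + 1)) * (Complex.I / 2) := by
    funext n
    rw [show (n : ℝ) + 1 = (n + 1 : ℕ) by push_cast; ring, hsin]
    ring
  have hsin1 := hsin 1
  rw [Nat.cast_one, one_mul] at hsin1
  rw [hterm, hsin1, hcos]
  have hden : 1 - 2 * s * ((e + e⁻¹) / 2) + s ^ 2 = (1 - s * e) * (1 - s * e⁻¹) := by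
    field_simp
    ring
  rw [hden]
  refine (congrArg (HasSum _) ?_).mp ((hsum'.sub hsum).mul_right (Complex.I / 2))
  rw [div_sub_div _ _ hne' hne, div_mul_eq_mul_div]
  ring

theorem integral_sin_mul_sin_div_one_sub_two_mul_cos_add_sq {s : ℂ} (hs : ‖s‖ < 1) :
    ∫ θ in (0 : ℝ)..π, (sin θ : ℂ) * (s * sin θ / (1 - 2 * s * cos θ + s ^ 2)) = π / 2 * s := by
  have hseries : HasSum
      (fun n : ℕ => ∫ θ in (0 : ℝ)..π, (sin θ : ℂ) * (s ^ (n + 1) * (sin ((n + 1) * θ) : ℂ)))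
      (∫ θ in (0 : ℝ)..π, (sin θ : ℂ) * (s * sin θ / (1 - 2 * s * cos θ + s ^ 2))) := by
    refine intervalIntegral.hasSum_integral_of_dominated_convergence (fun n _ => ‖s‖ ^ (n + 1))
      (fun n => (by fun_prop : Continuous _).aestronglyMeasurable) (fun n => ae_of_all _ ?_)
      (ae_of_all _ fun _ _ => ?_) intervalIntegrable_const
      (ae_of_all _ fun θ _ => (hasSum_pow_succ_mul_sin_nat_succ_mul hs θ).mul_left _)
    · intro θ _
      have h1 : ‖sin θ‖ ≤ 1 := abs_sin_le_one θ
      have h2 : ‖sin ((n + 1) * θ)‖ ≤ 1 := abs_sin_le_one _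
      rw [norm_mul, norm_mul, norm_pow, Complex.norm_real, Complex.norm_real]
      calc _ ≤ 1 * (‖s‖ ^ (n + 1) * 1) := by gcongr
        _ = _ := by ring
    · exact (summable_nat_add_iff 1).mpr (summable_geometric_of_lt_one (norm_nonneg s) hs)
  have hterm : ∀ n : ℕ,
      ∫ θ in (0 : ℝ)..π, (sin θ : ℂ) * (s ^ (n + 1) * (sin ((n + 1) * θ) : ℂ)) =
        if n = 0 then π / 2 * s else 0 := fun n => by
    simp_rw [show ∀ θ : ℝ, (sin θ : ℂ) * (s ^ (n + 1) * (sin ((n + 1) * θ) : ℂ)) =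
      s ^ (n + 1) * ((sin θ * sin ((n + 1) * θ) : ℝ) : ℂ) from fun θ => by push_cast; ring]
    rw [intervalIntegral.integral_const_mul, intervalIntegral.integral_ofReal,
      integral_sin_mul_sin_nat_succ_mul]
    split_ifs with hn <;> simp [hn]
    ring
  rw [funext hterm] at hseries
  exact hseries.unique (hasSum_ite_eq 0 _)

theorem semicircleDensity_two_mul_cos {θ : ℝ} (hθ : θ ∈ Icc 0 π) :
    semicircleDensity (2 * cos θ) = sin θ / π := by
  have hsqrt : √(4 - (2 * cos θ) ^ 2) = 2 * sin θ := by
    rw [show 4 - (2 * cos θ) ^ 2 = (2 * sin θ) ^ 2 by linear_combination -4 * sin_sq_add_cos_sq θ,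
      sqrt_sq (by linarith [sin_nonneg_of_mem_Icc hθ])]
  rw [semicircleDensity, hsqrt]
  field_simp

theorem semicircleStieltjes_add_inv {s : ℂ} (hs0 : s ≠ 0) (hs : ‖s‖ < 1) :
    semicircleStieltjes (s + s⁻¹) = s := by
  have hintegrand : ∀ θ ∈ uIcc 0 π, (2 * sin θ) • ((semicircleDensity (2 * cos θ) : ℂ) /
      (s + s⁻¹ - (2 * cos θ : ℝ))) =
      2 / π * ((sin θ : ℂ) * (s * sin θ / (1 - 2 * s * cos θ + s ^ 2))) := by
    intro θ hθ
    rw [uIcc_of_le pi_pos.le] at hθ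
    rw [semicircleDensity_two_mul_cos hθ, Complex.real_smul,
      show s + s⁻¹ - ((2 * cos θ : ℝ) : ℂ) = (1 - 2 * s * cos θ + s ^ 2) / s by
        push_cast; field_simp; ring, div_div_eq_mul_div]
    push_cast
    ring
  rw [semicircleStieltjes, integral_neg_two_two_eq_integral_comp_two_mul_cos,
    integral_congr hintegrand, intervalIntegral.integral_const_mul,
    integral_sin_mul_sin_div_one_sub_two_mul_cos_add_sq hs]
  field_simp

theorem exists_norm_lt_one_add_inv_eq {z : ℂ} (hz : z.im ≠ 0) :
    ∃ s : ℂ, s ≠ 0 ∧ ‖s‖ < 1 ∧ s + s⁻¹ = z := by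
  obtain ⟨w, hw⟩ := IsAlgClosed.exists_eq_mul_self (z ^ 2 - 4)
  have ht : (z + w) / 2 * ((z - w) / 2) = 1 := by linear_combination hw / 4
  set t := (z + w) / 2
  have ht0 : t ≠ 0 := left_ne_zero_of_mul_eq_one ht
  have htz : t + t⁻¹ = z := by rw [inv_eq_of_mul_eq_one_right ht]; ring
  have hnorm : ‖t‖ ≠ 1 := by
    intro h1
    have hinv : t⁻¹ = conj t := by rw [Complex.inv_def, Complex.normSq_eq_norm_sq, h1]; simp
    apply hz
    rw [← htz, hinv, Complex.add_conj]
    simp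
  rcases hnorm.lt_or_gt with h | h
  · exact ⟨t, ht0, h, htz⟩
  · exact ⟨t⁻¹, inv_ne_zero ht0, by rw [norm_inv]; exact inv_lt_one_of_one_lt₀ h,
      by rw [inv_inv, add_comm, htz]⟩

theorem im_pos_of_im_add_inv_neg {s : ℂ} (hs : ‖s‖ < 1) (h : (s + s⁻¹).im < 0) : 0 < s.im := by
  rw [Complex.add_im, Complex.inv_im] at h
  by_contra! hle
  have key : -s.im ≤ -s.im / Complex.normSq s := by
    rcases (Complex.normSq_nonneg s).eq_or_lt with h0 | h0
    · simp [Complex.normSq_eq_zero.mp h0.symm]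
    · have hN : Complex.normSq s < 1 := by
        rw [Complex.normSq_eq_norm_sq]; nlinarith [norm_nonneg s]
      rw [le_div_iff₀ h0]
      nlinarith
  linarith

theorem norm_sub_le_norm_mul_sub_conj_div_im {s a : ℂ} (hs : 0 ≤ s.im) (ha : 0 < a.im) :
    ‖s - a‖ ≤ ‖(s - a) * (s - conj a)‖ / a.im := by
  have hconj : a.im ≤ ‖s - conj a‖ := calc
    a.im ≤ (s - conj a).im := by simp; linarith
    _ ≤ ‖s - conj a‖ := (le_abs_self _).trans (Complex.abs_im_le_norm _)
  rw [le_div_iff₀ ha, norm_mul]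
  gcongr

theorem norm_semicircleStieltjes_sub_le {z : ℂ} (hz : z.im < 0) {E : ℝ} (hE : |E| < 2) :
    ‖semicircleStieltjes z - (E + Complex.I * (√(4 - E ^ 2) : ℝ)) / 2‖ ≤
      2 * ‖z - E‖ / √(4 - E ^ 2) := by
  obtain ⟨s, hs0, hs, rfl⟩ := exists_norm_lt_one_add_inv_eq hz.ne
  rw [semicircleStieltjes_add_inv hs0 hs]
  set r := √(4 - E ^ 2)
  have hr2 : r ^ 2 = 4 - E ^ 2 := sq_sqrt (by nlinarith [sq_abs E, abs_nonneg E])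
  have hr : 0 < r := sqrt_pos.mpr (by nlinarith [sq_abs E, abs_nonneg E])
  set a : ℂ := (E + Complex.I * r) / 2
  have ha : a.im = r / 2 := by simp [a]
  have hfactor : (s - a) * (s - conj a) = s * (s + s⁻¹ - E) := by
    have hconj : conj a = (E - Complex.I * r) / 2 := by
      simp only [a, map_div₀, map_add, map_mul, Complex.conj_ofReal, Complex.conj_I, map_ofNat]
      ring
    have hr2' : (r : ℂ) ^ 2 = 4 - E ^ 2 := by exact_mod_cast hr2
    rw [hconj]
    field_simp
    linear_combination (1 / 2) * hr2' - (r ^ 2 / 2 : ℂ) * Complex.I_sq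
  calc ‖s - a‖ ≤ ‖(s - a) * (s - conj a)‖ / a.im :=
        norm_sub_le_norm_mul_sub_conj_div_im (im_pos_of_im_add_inv_neg hs hz).le (by linarith)
    _ = ‖s‖ * ‖s + s⁻¹ - E‖ / (r / 2) := by rw [hfactor, norm_mul, ha]
    _ ≤ 1 * ‖s + s⁻¹ - E‖ / (r / 2) := by gcongr
    _ = 2 * ‖s + s⁻¹ - E‖ / r := by field_simp

/-- the Stieltjes transform of the semicircle law converges, as ε ↓ 0,
to `(E + i√(4−E²))/2` for `|E| < 2`. -/
theorem semicircle_stieltjes_limit (E : ℝ) (hE : |E| < 2) :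
    Filter.Tendsto
      (fun ε : ℝ => ∫ l in (-2:ℝ)..2,
        ((Real.sqrt (4 - l ^ 2) / (2 * Real.pi) : ℝ) : ℂ)
          / ((E : ℂ) - (ε : ℂ) * Complex.I - (l : ℂ)))
      (nhdsWithin 0 (Set.Ioi 0))
      (nhds (((E : ℂ) + Complex.I * (Real.sqrt (4 - E ^ 2) : ℝ)) / 2)) := by
  change Filter.Tendsto (fun ε : ℝ => semicircleStieltjes (E - ε * Complex.I)) _ _
  have hbound : ∀ ε : ℝ, 0 < ε → ‖semicircleStieltjes (E - ε * Complex.I) -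
      (E + Complex.I * (√(4 - E ^ 2) : ℝ)) / 2‖ ≤ 2 * ε / √(4 - E ^ 2) := fun ε hε => by
    simpa [abs_of_pos hε] using
      norm_semicircleStieltjes_sub_le (z := E - ε * Complex.I) (by simpa using hε) hE
  have hbound_lim : Filter.Tendsto (fun ε : ℝ => 2 * ε / √(4 - E ^ 2)) (nhdsWithin 0 (Ioi 0))
      (nhds 0) :=
    (Continuous.tendsto' (by fun_prop) 0 0 (by simp)).mono_left nhdsWithin_le_nhds
  exact tendsto_iff_norm_sub_tendsto_zero.mpr <|
    squeeze_zero' (.of_forall fun _ => norm_nonneg _) (eventually_nhdsWithin_of_forall hbound)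
      hbound_lim
end

section
/- Let H be a complex Hilbert space, let A and A₀ be bounded self-adjoint operators with 0 ≤ A ≤ I and 0 ≤ A₀ ≤ I, let Λ, P, P̃ be orthogonal projections, and let δ, δ₁ ≥ 0 and Δ ∈ ℝ. Assume: (1) ΛAΛ ≤ ΛA₀Λ + δ·I; (2) ‖[Λ,P]‖ ≤ δ₁ and ‖[Λ,P̃]‖ ≤ δ₁; (3) [P̃, A₀] = 0; (4) (I − P̃)A₀(I − P̃) ≤ (1 − Δ)·I; (5) ‖P̃(I − P)‖ ≤ 1/2. Then Λ(I − P)A(I − P)Λ ≤ (1 − Δ/2 + δ + 4δ₁)·I. -/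
/-!
Work in the C⋆-algebra `H →L[ℂ] H` with `X = (1 - P)Λ` and `Y = Λ(1 - P)`: the operator to bound
is `X⋆AX`, and `X - Y = [Λ, P]`. Exchanging `X` and `Y` in a sandwich `X⋆BX` with `0 ≤ B ≤ 1`
costs at most `2‖[Λ, P]‖`. This is done once to reach `Y⋆AY = (1 - P)ΛAΛ(1 - P)`, where
hypothesis (1) replaces `A` by `A₀` at a cost `δ`, and once more to come back to `X⋆A₀X`.
Since `P̃` commutes with `A₀`, `A₀ = P̃A₀P̃ + (1 - P̃)A₀(1 - P̃) ≤ P̃ + (1 - Δ)(1 - P̃)`, and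
`‖P̃X‖ ≤ 1/2` then gives `X⋆A₀X ≤ 1 - Δ + Δ/4` for `0 ≤ Δ ≤ 1`; for `Δ ≤ 0` use `A₀ ≤ 1`, and
`Δ > 1` forces `H = 0`.
-/

lemma IsIdempotentElem.mul_mul_add_one_sub_mul_mul_of_commute {R : Type*} [Ring R]
    {p a : R} (hp : IsIdempotentElem p) (hpa : Commute p a) :
    p * a * p + (1 - p) * a * (1 - p) = a := by
  have hq : (1 - p) * (1 - p) = 1 - p := hp.one_sub.eq
  rw [hpa.eq, mul_assoc, hp.eq, ((Commute.one_left a).sub_left hpa).eq, mul_assoc, hq]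
  noncomm_ring

namespace CStarAlgebra

variable {A : Type*} [CStarAlgebra A] [PartialOrder A] [StarOrderedRing A]

lemma star_mul_self_le_one {x : A} (hx : ‖x‖ ≤ 1) : star x * x ≤ 1 :=
  star_mul_le_algebraMap_norm_sq.trans <| by
    simpa using algebraMap_mono A (pow_le_one₀ (norm_nonneg x) hx)

lemma star_mul_algebraMap_mul_le {x : A} (hx : ‖x‖ ≤ 1) {r : ℝ} (hr : 0 ≤ r) :
    star x * algebraMap ℝ A r * x ≤ algebraMap ℝ A r := by
  simpa [Algebra.algebraMap_eq_smul_one, smul_mul_assoc, mul_smul_comm] using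
    smul_le_smul_of_nonneg_left (star_mul_self_le_one hx) hr

lemma conjugate_le_conjugate_add_norm_sub {a x y : A} (ha : IsSelfAdjoint a) (ha₁ : ‖a‖ ≤ 1)
    (hx : ‖x‖ ≤ 1) (hy : ‖y‖ ≤ 1) :
    star x * a * x ≤ star y * a * y + algebraMap ℝ A (2 * ‖x - y‖) := by
  have hsa : IsSelfAdjoint (star x * a * x - star y * a * y) :=
    (ha.conjugate' x).sub (ha.conjugate' y)
  have hsplit : star x * a * x - star y * a * y = star x * a * (x - y) + star (x - y) * a * y := by
    rw [star_sub]; noncomm_ring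
  have hnorm : ‖star x * a * x - star y * a * y‖ ≤ 2 * ‖x - y‖ := by
    rw [hsplit]
    refine (norm_add_le_of_le norm_mul₃_le norm_mul₃_le).trans ?_
    rw [norm_star, norm_star]
    calc ‖x‖ * ‖a‖ * ‖x - y‖ + ‖x - y‖ * ‖a‖ * ‖y‖ ≤ 1 * 1 * ‖x - y‖ + ‖x - y‖ * 1 * 1 := by
          gcongr
      _ = 2 * ‖x - y‖ := by ring
  calc star x * a * x = star y * a * y + (star x * a * x - star y * a * y) := by abel
    _ ≤ star y * a * y + algebraMap ℝ A ‖star x * a * x - star y * a * y‖ :=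
      add_le_add_right hsa.le_algebraMap_norm_self _
    _ ≤ star y * a * y + algebraMap ℝ A (2 * ‖x - y‖) := add_le_add_right (algebraMap_mono A hnorm) _

lemma le_algebraMap_add_smul_of_commute {a p : A} {Δ : ℝ} (ha₁ : a ≤ 1) (hp : IsStarProjection p)
    (hpa : Commute p a) (hΔ : (1 - p) * a * (1 - p) ≤ algebraMap ℝ A (1 - Δ)) :
    a ≤ algebraMap ℝ A (1 - Δ) + Δ • p := by
  have hq := hp.one_sub
  have hpap : p * a * p ≤ p := by
    simpa [hp.isIdempotentElem.eq] using hp.isSelfAdjoint.conjugate_le_conjugate ha₁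
  have hqaq : (1 - p) * a * (1 - p) ≤ (1 - Δ) • (1 - p) := by
    have := hq.isSelfAdjoint.conjugate_le_conjugate hΔ
    simpa [Algebra.algebraMap_eq_smul_one, mul_assoc, hq.isIdempotentElem.eq,
      hq.isIdempotentElem.mul_self_mul] using this
  calc a = p * a * p + (1 - p) * a * (1 - p) :=
        (hp.isIdempotentElem.mul_mul_add_one_sub_mul_mul_of_commute hpa).symm
    _ ≤ p + (1 - Δ) • (1 - p) := add_le_add hpap hqaq
    _ = algebraMap ℝ A (1 - Δ) + Δ • p := by
      rw [Algebra.algebraMap_eq_smul_one]; module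

lemma le_one_of_conjugate_le_algebraMap {a p : A} {Δ : ℝ} [Nontrivial A] (ha₀ : 0 ≤ a)
    (hp : IsStarProjection p) (hΔ : (1 - p) * a * (1 - p) ≤ algebraMap ℝ A (1 - Δ)) : Δ ≤ 1 := by
  have h : algebraMap ℝ A 0 ≤ algebraMap ℝ A (1 - Δ) := by
    have h₀ := star_left_conjugate_nonneg ha₀ (1 - p)
    rw [hp.one_sub.isSelfAdjoint.star_eq] at h₀
    simpa using h₀.trans hΔ
  linarith [algebraMap_le_algebraMap.mp h]

lemma conjugate_le_algebraMap_of_commute {a p x : A} {Δ : ℝ} (ha₀ : 0 ≤ a) (ha₁ : a ≤ 1)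
    (hp : IsStarProjection p) (hpa : Commute p a)
    (hΔ : (1 - p) * a * (1 - p) ≤ algebraMap ℝ A (1 - Δ)) (hx : ‖x‖ ≤ 1) (hpx : ‖p * x‖ ≤ 1 / 2) :
    star x * a * x ≤ algebraMap ℝ A (1 - Δ / 2) := by
  obtain _ | _ := subsingleton_or_nontrivial A
  · exact (Subsingleton.elim _ _).le
  have hΔ₁ : Δ ≤ 1 := le_one_of_conjugate_le_algebraMap ha₀ hp hΔ
  rcases le_total Δ 0 with hΔ₀ | hΔ₀
  · calc star x * a * x ≤ star x * 1 * x := star_left_conjugate_le_conjugate ha₁ x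
      _ ≤ algebraMap ℝ A 1 := by simpa using star_mul_self_le_one hx
      _ ≤ algebraMap ℝ A (1 - Δ / 2) := algebraMap_mono A (by linarith)
  · have hpx' : ‖p * x‖ ^ 2 ≤ 1 / 4 := by nlinarith [norm_nonneg (p * x)]
    calc star x * a * x ≤ star x * (algebraMap ℝ A (1 - Δ) + Δ • p) * x :=
          star_left_conjugate_le_conjugate (le_algebraMap_add_smul_of_commute ha₁ hp hpa hΔ) x
      _ = (1 - Δ) • (star x * x) + Δ • (star (p * x) * (p * x)) := by
          simp only [star_mul, hp.isSelfAdjoint.star_eq, Algebra.algebraMap_eq_smul_one, add_mul,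
            mul_add, smul_mul_assoc, mul_smul_comm, one_mul, mul_assoc,
            hp.isIdempotentElem.mul_self_mul]
      _ ≤ (1 - Δ) • (1 : A) + Δ • algebraMap ℝ A (1 / 4) := by
          refine add_le_add (smul_le_smul_of_nonneg_left (star_mul_self_le_one hx) (by linarith))
            (smul_le_smul_of_nonneg_left ?_ hΔ₀)
          exact star_mul_le_algebraMap_norm_sq.trans (algebraMap_mono A hpx')
      _ = algebraMap ℝ A (1 - 3 * Δ / 4) := by
          simp only [Algebra.algebraMap_eq_smul_one, smul_smul]; module
      _ ≤ algebraMap ℝ A (1 - Δ / 2) := algebraMap_mono A (by linarith)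

lemma conjugate_le_conjugate_add_algebraMap {b c y : A} {δ : ℝ} (h : b ≤ c + algebraMap ℝ A δ)
    (hy : ‖y‖ ≤ 1) (hδ : 0 ≤ δ) :
    star y * b * y ≤ star y * c * y + algebraMap ℝ A δ := by
  calc star y * b * y ≤ star y * (c + algebraMap ℝ A δ) * y := star_left_conjugate_le_conjugate h y
    _ = star y * c * y + star y * algebraMap ℝ A δ * y := by noncomm_ring
    _ ≤ star y * c * y + algebraMap ℝ A δ := add_le_add_right (star_mul_algebraMap_mul_le hy hδ) _

theorem conjugate_one_sub_le_of_norm_commutator_le {a a₀ l p pt : A} {δ δ₁ Δ : ℝ} (hδ : 0 ≤ δ)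
    (ha_nonneg : 0 ≤ a) (ha_le_one : a ≤ 1) (ha₀_nonneg : 0 ≤ a₀) (ha₀_le_one : a₀ ≤ 1)
    (hl : IsStarProjection l) (hp : IsStarProjection p) (hpt : IsStarProjection pt)
    (h₁ : l * a * l ≤ l * a₀ * l + algebraMap ℝ A δ) (h₂ : ‖l * p - p * l‖ ≤ δ₁)
    (h₃ : Commute pt a₀) (h₄ : (1 - pt) * a₀ * (1 - pt) ≤ algebraMap ℝ A (1 - Δ))
    (h₅ : ‖pt * (1 - p)‖ ≤ 1 / 2) :
    l * (1 - p) * a * (1 - p) * l ≤ algebraMap ℝ A (1 - Δ / 2 + δ + 4 * δ₁) := by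
  have hq := hp.one_sub
  set x := (1 - p) * l
  set y := l * (1 - p)
  have hl₁ : ‖l‖ ≤ 1 := hl.norm_le
  have hx : ‖x‖ ≤ 1 := norm_mul_le_of_le hq.norm_le hl₁ |>.trans_eq (one_mul 1)
  have hy : ‖y‖ ≤ 1 := norm_mul_le_of_le hl₁ hq.norm_le |>.trans_eq (one_mul 1)
  have hxy : ‖x - y‖ ≤ δ₁ := by
    convert h₂ using 2
    simp only [x, y]
    noncomm_ring
  have hptx : ‖pt * x‖ ≤ 1 / 2 := by
    rw [← mul_assoc]
    exact norm_mul_le_of_le h₅ hl₁ |>.trans_eq (mul_one _)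
  have hstar_x : ∀ b, star x * b * x = l * (1 - p) * b * (1 - p) * l := fun b => by
    simp only [x, star_mul, hl.isSelfAdjoint.star_eq, hq.isSelfAdjoint.star_eq, mul_assoc]
  have hstar_y : ∀ b, star y * b * y = star (1 - p) * (l * b * l) * (1 - p) := fun b => by
    simp only [y, star_mul, hl.isSelfAdjoint.star_eq, mul_assoc]
  have ha_norm := (norm_le_one_iff_of_nonneg a).mpr ha_le_one
  have ha₀_norm := (norm_le_one_iff_of_nonneg a₀).mpr ha₀_le_one
  calc l * (1 - p) * a * (1 - p) * l = star x * a * x := (hstar_x a).symm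
    _ ≤ star y * a * y + algebraMap ℝ A (2 * ‖x - y‖) :=
      conjugate_le_conjugate_add_norm_sub (.of_nonneg ha_nonneg) ha_norm hx hy
    _ ≤ star y * a₀ * y + algebraMap ℝ A δ + algebraMap ℝ A (2 * ‖x - y‖) := by
      rw [hstar_y, hstar_y]
      exact add_le_add_left (conjugate_le_conjugate_add_algebraMap h₁ hq.norm_le hδ) _
    _ ≤ star x * a₀ * x + algebraMap ℝ A (2 * ‖y - x‖) + algebraMap ℝ A δ
          + algebraMap ℝ A (2 * ‖x - y‖) := by
      gcongr
      exact conjugate_le_conjugate_add_norm_sub (.of_nonneg ha₀_nonneg) ha₀_norm hy hx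
    _ ≤ algebraMap ℝ A (1 - Δ / 2) + algebraMap ℝ A (2 * ‖y - x‖) + algebraMap ℝ A δ
          + algebraMap ℝ A (2 * ‖x - y‖) := by
      gcongr
      exact conjugate_le_algebraMap_of_commute ha₀_nonneg ha₀_le_one hpt h₃ h₄ hx hptx
    _ = algebraMap ℝ A (1 - Δ / 2 + δ + 4 * ‖x - y‖) := by
      rw [norm_sub_rev, ← map_add, ← map_add, ← map_add]
      ring_nf
    _ ≤ algebraMap ℝ A (1 - Δ / 2 + δ + 4 * δ₁) := algebraMap_mono A (by linarith)

end CStarAlgebra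

open ContinuousLinearMap in
theorem projection_operator_bound_general
    {H : Type*} [NormedAddCommGroup H] [InnerProductSpace ℂ H] [CompleteSpace H]
    (A A₀ Λ P Pt : H →L[ℂ] H) (δ δ₁ Δ : ℝ) (hδ : 0 ≤ δ)
    (hA : A.IsPositive) (hA' : ((1 : H →L[ℂ] H) - A).IsPositive)
    (hA₀ : A₀.IsPositive) (hA₀' : ((1 : H →L[ℂ] H) - A₀).IsPositive)
    (hΛsa : IsSelfAdjoint Λ) (hΛidem : Λ ∘L Λ = Λ)
    (hPsa : IsSelfAdjoint P) (hPidem : P ∘L P = P)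
    (hPtsa : IsSelfAdjoint Pt) (hPtidem : Pt ∘L Pt = Pt)
    (h1 : ((Λ ∘L A₀ ∘L Λ + (δ : ℂ) • (1 : H →L[ℂ] H)) - Λ ∘L A ∘L Λ).IsPositive)
    (h2 : ‖Λ ∘L P - P ∘L Λ‖ ≤ δ₁)
    (h3 : Pt ∘L A₀ = A₀ ∘L Pt)
    (h4 : (((1 - Δ : ℝ) : ℂ) • (1 : H →L[ℂ] H)
        - ((1 : H →L[ℂ] H) - Pt) ∘L A₀ ∘L ((1 : H →L[ℂ] H) - Pt)).IsPositive)
    (h5 : ‖Pt ∘L ((1 : H →L[ℂ] H) - P)‖ ≤ 1 / 2) :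
    (((1 - Δ / 2 + δ + 4 * δ₁ : ℝ) : ℂ) • (1 : H →L[ℂ] H)
      - Λ ∘L ((1 : H →L[ℂ] H) - P) ∘L A ∘L ((1 : H →L[ℂ] H) - P) ∘L Λ).IsPositive := by
  have hscalar (r : ℝ) : (r : ℂ) • (1 : H →L[ℂ] H) = algebraMap ℝ (H →L[ℂ] H) r := by
    rw [Algebra.algebraMap_eq_smul_one, Complex.coe_smul]
  rw [hscalar] at h1 h4 ⊢
  rw [← le_def] at hA' hA₀' h1 h4 ⊢
  exact CStarAlgebra.conjugate_one_sub_le_of_norm_commutator_le hδ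
    ((nonneg_iff_isPositive A).mpr hA) hA' ((nonneg_iff_isPositive A₀).mpr hA₀) hA₀'
    ⟨hΛidem, hΛsa⟩ ⟨hPidem, hPsa⟩ ⟨hPtidem, hPtsa⟩ h1 h2 h3 h4 h5

/-- Proposition 5.2 of the paper: if `0 ≤ A, A₀ ≤ I`, `Λ, P, P̃` are
orthogonal projections with `ΛAΛ ≤ ΛA₀Λ + δ`, `‖[Λ,P]‖ ≤ δ₁`, `‖[Λ,P̃]‖ ≤ δ₁`,
`[P̃, A₀] = 0`, `(I−P̃)A₀(I−P̃) ≤ (1−Δ)I` and `‖P̃(I−P)‖ ≤ 1/2`, then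
`Λ(I−P)A(I−P)Λ ≤ (1 − Δ/2 + δ + 4δ₁)I` in the Loewner order. -/
theorem projection_operator_bound
    {H : Type*} [NormedAddCommGroup H] [InnerProductSpace ℂ H] [CompleteSpace H]
    (A A₀ Λ P Pt : H →L[ℂ] H) (δ δ₁ Δ : ℝ) (hδ : 0 ≤ δ) (hδ₁ : 0 ≤ δ₁)
    (hA : A.IsPositive) (hA' : ((1 : H →L[ℂ] H) - A).IsPositive)
    (hA₀ : A₀.IsPositive) (hA₀' : ((1 : H →L[ℂ] H) - A₀).IsPositive)
    (hΛsa : IsSelfAdjoint Λ) (hΛidem : Λ ∘L Λ = Λ)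
    (hPsa : IsSelfAdjoint P) (hPidem : P ∘L P = P)
    (hPtsa : IsSelfAdjoint Pt) (hPtidem : Pt ∘L Pt = Pt)
    (h1 : ((Λ ∘L A₀ ∘L Λ + (δ : ℂ) • (1 : H →L[ℂ] H)) - Λ ∘L A ∘L Λ).IsPositive)
    (h2 : ‖Λ ∘L P - P ∘L Λ‖ ≤ δ₁)
    (h2' : ‖Λ ∘L Pt - Pt ∘L Λ‖ ≤ δ₁)
    (h3 : Pt ∘L A₀ = A₀ ∘L Pt)
    (h4 : (((1 - Δ : ℝ) : ℂ) • (1 : H →L[ℂ] H)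
        - ((1 : H →L[ℂ] H) - Pt) ∘L A₀ ∘L ((1 : H →L[ℂ] H) - Pt)).IsPositive)
    (h5 : ‖Pt ∘L ((1 : H →L[ℂ] H) - P)‖ ≤ 1 / 2) :
    (((1 - Δ / 2 + δ + 4 * δ₁ : ℝ) : ℂ) • (1 : H →L[ℂ] H)
      - Λ ∘L ((1 : H →L[ℂ] H) - P) ∘L A ∘L ((1 : H →L[ℂ] H) - P) ∘L Λ).IsPositive :=
  projection_operator_bound_general A A₀ Λ P Pt δ δ₁ Δ hδ hA hA' hA₀ hA₀' hΛsa hΛidem hPsa hPidem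
    hPtsa hPtidem h1 h2 h3 h4 h5
end

section
/- Let W > 0 and let F: ℝ → ℂ be Lipschitz with constant ℓ, i.e. |F(x) − F(y)| ≤ ℓ|x − y| for all x, y. Let B be the bounded integral operator on L²(ℝ) with kernel B(x,y) = (2π)^{−1/2}·W·e^{−W²(x−y)²/2}, and let M_F be the operator of multiplication by F. Then the commutator satisfies ‖[M_F, B]‖ ≤ √(2/π)·ℓ/W. -/
/-!
The kernel of `[M_F, B]` is dominated by the translation-invariant kernel
`g (x - y)` with `g u = ℓ |u| (2π)^{-1/2} W e^{-W²u²/2}`. By the Schur test (Cauchy–Schwarz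
against the weight `g (x - y)`, then Tonelli), an integral operator whose kernel is bounded by
`g (x - y)` has norm at most `‖g‖₁` on `L²`, and `‖g‖₁ = √(2/π) ℓ / W` by the Gaussian moment
`∫ |u| e^{-bu²} du = 1/b`.
-/

open MeasureTheory Real Function
open scoped ENNReal

theorem sq_lintegral_mul_le {α : Type*} [MeasurableSpace α] {μ : Measure α} {k h : α → ℝ≥0∞}
    (hk : AEMeasurable k μ) (hh : AEMeasurable h μ) :
    (∫⁻ a, k a * h a ∂μ) ^ 2 ≤ (∫⁻ a, k a ∂μ) * ∫⁻ a, k a * h a ^ 2 ∂μ := by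
  have hsqrt : ∀ a : ℝ≥0∞, a ^ (2⁻¹ : ℝ) * a ^ (2⁻¹ : ℝ) = a := fun a => by
    rw [← ENNReal.rpow_add_of_nonneg _ _ (by norm_num) (by norm_num)]; norm_num
  have hsplit : ∀ a, k a * h a = k a ^ (2⁻¹ : ℝ) * (k a * h a ^ 2) ^ (2⁻¹ : ℝ) := fun a => by
    rw [ENNReal.mul_rpow_of_nonneg _ _ (by norm_num), ← ENNReal.rpow_natCast,
      ← ENNReal.rpow_mul, ← mul_assoc, hsqrt]
    norm_num
  have holder := ENNReal.lintegral_mul_norm_pow_le hk (hk.mul (hh.pow_const 2))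
    (p := 2⁻¹) (q := 2⁻¹) (by norm_num) (by norm_num) (by norm_num)
  calc (∫⁻ a, k a * h a ∂μ) ^ 2
      ≤ ((∫⁻ a, k a ∂μ) ^ (2⁻¹ : ℝ) * (∫⁻ a, k a * h a ^ 2 ∂μ) ^ (2⁻¹ : ℝ)) ^ 2 := by
        rw [lintegral_congr hsplit]; gcongr; exact holder
    _ = (∫⁻ a, k a ∂μ) * ∫⁻ a, k a * h a ^ 2 ∂μ := by
      rw [sq, mul_mul_mul_comm, hsqrt, hsqrt]

section Schur

variable {α β : Type*} [MeasurableSpace α] [MeasurableSpace β] {μ : Measure α} {ν : Measure β}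
  [SFinite μ] [SFinite ν] {k : α → β → ℝ≥0∞} {C : ℝ≥0∞}

theorem lintegral_sq_lintegral_kernel_mul_le (hk : Measurable (uncurry k))
    (hrow : ∀ x, ∫⁻ y, k x y ∂ν ≤ C) (hcol : ∀ y, ∫⁻ x, k x y ∂μ ≤ C)
    {h : β → ℝ≥0∞} (hh : AEMeasurable h ν) :
    ∫⁻ x, (∫⁻ y, k x y * h y ∂ν) ^ 2 ∂μ ≤ C ^ 2 * ∫⁻ y, h y ^ 2 ∂ν := by
  have hkh : AEMeasurable (uncurry fun x y => k x y * h y ^ 2) (μ.prod ν) :=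
    hk.aemeasurable.mul ((hh.pow_const 2).comp_quasiMeasurePreserving
      Measure.quasiMeasurePreserving_snd)
  calc ∫⁻ x, (∫⁻ y, k x y * h y ∂ν) ^ 2 ∂μ
      ≤ ∫⁻ x, C * ∫⁻ y, k x y * h y ^ 2 ∂ν ∂μ := by
        refine lintegral_mono fun x => ?_
        grw [sq_lintegral_mul_le hk.of_uncurry_left.aemeasurable hh, hrow x]
    _ = C * ∫⁻ y, (∫⁻ x, k x y ∂μ) * h y ^ 2 ∂ν := by
        rw [lintegral_const_mul'' _ (f := fun x => ∫⁻ y, k x y * h y ^ 2 ∂ν)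
          hkh.lintegral_prod_right', lintegral_lintegral_swap hkh]
        simp_rw [lintegral_mul_const _ hk.of_uncurry_right]
    _ ≤ C * ∫⁻ y, C * h y ^ 2 ∂ν := by
        gcongr with y
        exact hcol y
    _ = C ^ 2 * ∫⁻ y, h y ^ 2 ∂ν := by
        rw [lintegral_const_mul'' _ (hh.pow_const 2), ← mul_assoc, sq]

variable {𝕜 E : Type*} [NormedField 𝕜] [NormedAddCommGroup E] [NormedSpace ℝ E] [NormedSpace 𝕜 E]

theorem eLpNorm_integral_smul_le_of_schur (hk : Measurable (uncurry k))
    (hrow : ∀ x, ∫⁻ y, k x y ∂ν ≤ C) (hcol : ∀ y, ∫⁻ x, k x y ∂μ ≤ C)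
    {K : α → β → 𝕜} (hK : ∀ x y, ‖K x y‖ₑ ≤ k x y) {f : β → E} (hf : AEStronglyMeasurable f ν) :
    eLpNorm (fun x => ∫ y, K x y • f y ∂ν) 2 μ ≤ C * eLpNorm f 2 ν := by
  simp only [eLpNorm_eq_lintegral_rpow_enorm_toReal two_ne_zero ENNReal.ofNat_ne_top,
    ENNReal.toReal_ofNat, ENNReal.rpow_two]
  calc (∫⁻ x, ‖∫ y, K x y • f y ∂ν‖ₑ ^ 2 ∂μ) ^ (1 / 2 : ℝ)
      ≤ (∫⁻ x, (∫⁻ y, k x y * ‖f y‖ₑ ∂ν) ^ 2 ∂μ) ^ (1 / 2 : ℝ) := by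
        gcongr with x
        refine (enorm_integral_le_lintegral_enorm _).trans (lintegral_mono fun y => ?_)
        rw [enorm_smul]
        gcongr
        exact hK x y
    _ ≤ (C ^ 2 * ∫⁻ y, ‖f y‖ₑ ^ 2 ∂ν) ^ (1 / 2 : ℝ) := by
        gcongr
        exact lintegral_sq_lintegral_kernel_mul_le hk hrow hcol hf.enorm
    _ = C * (∫⁻ y, ‖f y‖ₑ ^ 2 ∂ν) ^ (1 / 2 : ℝ) := by
        rw [ENNReal.mul_rpow_of_nonneg _ _ (by norm_num), ← ENNReal.rpow_natCast,
          ← ENNReal.rpow_mul]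
        norm_num

end Schur

theorem eLpNorm_integral_smul_le_of_enorm_le_comp_sub {G 𝕜 E : Type*} [MeasurableSpace G]
    [AddCommGroup G] [MeasurableAdd₂ G] [MeasurableNeg G] {μ : Measure G} [SFinite μ]
    [μ.IsAddLeftInvariant] [μ.IsNegInvariant] [NormedField 𝕜] [NormedAddCommGroup E]
    [NormedSpace ℝ E] [NormedSpace 𝕜 E] {g : G → ℝ≥0∞} (hg : Measurable g)
    {K : G → G → 𝕜} (hK : ∀ x y, ‖K x y‖ₑ ≤ g (x - y)) {f : G → E}
    (hf : AEStronglyMeasurable f μ) :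
    eLpNorm (fun x => ∫ y, K x y • f y ∂μ) 2 μ ≤ (∫⁻ u, g u ∂μ) * eLpNorm f 2 μ :=
  eLpNorm_integral_smul_le_of_schur (k := fun x y => g (x - y)) (hg.comp measurable_sub)
    (fun x => (lintegral_sub_left_eq_self g x).le)
    (fun y => (lintegral_sub_right_eq_self g y).le) hK hf

theorem integral_Ioi_mul_exp_neg_mul_sq {b : ℝ} (hb : 0 < b) :
    ∫ x in Set.Ioi (0 : ℝ), x * exp (-b * x ^ 2) = (2 * b)⁻¹ := by
  have h := integral_mul_cexp_neg_mul_sq (b := (b : ℂ)) (by simpa using hb)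
  rw [← Complex.ofReal_inj]
  push_cast
  rw [← h, ← integral_complex_ofReal]
  push_cast
  rfl

theorem integral_abs_mul_exp_neg_mul_sq {b : ℝ} (hb : 0 < b) :
    ∫ x, |x| * exp (-b * x ^ 2) = b⁻¹ := by
  have h := integral_comp_abs (f := fun x => x * exp (-b * x ^ 2))
  simp only [sq_abs] at h
  rw [h, integral_Ioi_mul_exp_neg_mul_sq hb]
  field_simp

theorem integrable_abs_mul_exp_neg_mul_sq {b : ℝ} (hb : 0 < b) :
    Integrable fun x : ℝ => |x| * exp (-b * x ^ 2) := by
  simpa [abs_mul] using (integrable_mul_exp_neg_mul_sq hb).abs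

theorem integral_abs_mul_gaussian {W : ℝ} (hW : W ≠ 0) :
    ∫ u, |u| * ((2 * π) ^ (-(1 : ℝ) / 2) * W * exp (-W ^ 2 * u ^ 2 / 2)) = √(2 / π) / W := by
  have hb : 0 < W ^ 2 / 2 := by positivity
  simp_rw [show ∀ u : ℝ, -W ^ 2 * u ^ 2 / 2 = -(W ^ 2 / 2) * u ^ 2 from fun u => by ring,
    mul_left_comm |_|, integral_const_mul, integral_abs_mul_exp_neg_mul_sq hb]
  have hπ := pi_pos
  rw [show (-(1 : ℝ) / 2) = -(1 / 2) by norm_num, rpow_neg (by positivity), ← sqrt_eq_rpow,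
    sqrt_mul zero_le_two, sqrt_div zero_le_two]
  field_simp
  exact (sq_sqrt zero_le_two).symm

theorem integrable_abs_mul_gaussian {W : ℝ} (hW : W ≠ 0) :
    Integrable fun u : ℝ => |u| * ((2 * π) ^ (-(1 : ℝ) / 2) * W * exp (-W ^ 2 * u ^ 2 / 2)) := by
  have hb : 0 < W ^ 2 / 2 := by positivity
  refine ((integrable_abs_mul_exp_neg_mul_sq hb).const_mul ((2 * π) ^ (-(1 : ℝ) / 2) * W)).congr
    (ae_of_all _ fun u => by ring_nf)

/-- if `F` is Lipschitz with constant `ℓ`, then the commutator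
`[M_F, B]` of the multiplication operator by `F` with the Gaussian integral operator
`B`, i.e. the integral operator with kernel `(F(x) − F(y))·(2π)^{−1/2}·W·e^{−W²(x−y)²/2}`,
has operator norm at most `√(2/π)·ℓ/W` on `L²(ℝ)`. -/
theorem commutator_bound (W ℓ : ℝ) (hW : 0 < W) (hℓ : 0 ≤ ℓ)
    (F : ℝ → ℂ) (hF : ∀ x y : ℝ, ‖F x - F y‖ ≤ ℓ * |x - y|)
    (T : Lp ℂ 2 (volume : Measure ℝ) →L[ℂ] Lp ℂ 2 (volume : Measure ℝ))
    (hT : ∀ f : Lp ℂ 2 (volume : Measure ℝ),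
      ⇑(T f) =ᵐ[volume] fun x : ℝ =>
        ∫ y : ℝ, (F x - F y)
          * (((2 * Real.pi) ^ (-(1 : ℝ) / 2) * W * Real.exp (-W ^ 2 * (x - y) ^ 2 / 2) : ℝ) : ℂ)
          * f y) :
    ‖T‖ ≤ Real.sqrt (2 / Real.pi) * ℓ / W := by
  set g : ℝ → ℝ := fun u => ℓ * (|u| * ((2 * π) ^ (-(1 : ℝ) / 2) * W * exp (-W ^ 2 * u ^ 2 / 2)))
  have hC : 0 ≤ √(2 / π) * ℓ / W := by positivity
  have hg : ∫⁻ u, ENNReal.ofReal (g u) = ENNReal.ofReal (√(2 / π) * ℓ / W) := by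
    rw [← ofReal_integral_eq_lintegral_ofReal ((integrable_abs_mul_gaussian hW.ne').const_mul ℓ)
      (ae_of_all _ fun u => by positivity), integral_const_mul, integral_abs_mul_gaussian hW.ne',
      mul_div_assoc', mul_comm ℓ]
  have hK : ∀ x y, ‖(F x - F y) * (((2 * π) ^ (-(1 : ℝ) / 2) * W
      * exp (-W ^ 2 * (x - y) ^ 2 / 2) : ℝ) : ℂ)‖ₑ ≤ ENNReal.ofReal (g (x - y)) := by
    intro x y
    rw [← ofReal_norm, norm_mul, Complex.norm_real, Real.norm_of_nonneg (by positivity)]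
    exact ENNReal.ofReal_le_ofReal
      ((mul_le_mul_of_nonneg_right (hF x y) (by positivity)).trans_eq (mul_assoc _ _ _))
  refine T.opNorm_le_bound hC fun f => ?_
  have hbound := eLpNorm_integral_smul_le_of_enorm_le_comp_sub
    (by simp only [g]; fun_prop : Measurable fun u => ENNReal.ofReal (g u)) hK
    (Lp.aestronglyMeasurable f)
  rw [hg] at hbound
  rw [Lp.norm_def, Lp.norm_def, eLpNorm_congr_ae (hT f)]
  calc _ ≤ (ENNReal.ofReal (√(2 / π) * ℓ / W) * eLpNorm f 2 volume).toReal :=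
        ENNReal.toReal_mono (ENNReal.mul_ne_top ENNReal.ofReal_ne_top (Lp.eLpNorm_ne_top f))
          hbound
    _ = _ := by rw [ENNReal.toReal_mul, ENNReal.toReal_ofReal hC]
end

section
/- For every q ∈ (0,1) there exist constants ε₀ > 0 and C > 0, depending only on q, with the following property: for every finite index set Γ ⊂ ℤ², every ε ≤ ε₀, and every complex matrix R = (R_{k,k'})_{k,k'∈Γ} with |R_{k,k'}| ≤ ε·q^{|k−k'|₁/2} for all k, k' ∈ Γ (where |k−k'|₁ = |k₁−k₁'| + |k₂−k₂'|), the matrix I + R is invertible and |(I + R)^{−1}_{k,k'}| ≤ C·q^{|k−k'|₁/4} for all k, k' ∈ Γ. -/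
/-!
Let `r = q^{1/4}`. Since `|k - k'|₁ ≤ |k - j|₁ + |j - k'|₁`, the hypothesis
`|R_{kj}| ≤ ε r^{2|k-j|₁}` gives `∑_j |R_{kj}| r^{|j-k'|₁} ≤ ε S r^{|k-k'|₁}`, where
`S = (∑_{m ∈ ℤ} r^{|m|})²` bounds every row sum `∑_j r^{|k-j|₁}`. So for `ε ≤ 1/(2S)` the weight
`w_{kk'} = r^{|k-k'|₁}` is contracted by `|R|` with factor `1/2`. For a solution of
`x + R x = b` with `|b| ≤ β w`, the largest ratio `m = max_k |x_k| / w_k` then satisfies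
`m ≤ β + m/2`. Taking `b = 0` gives injectivity of `1 + R`, taking for `b` the columns of the
identity gives `|(1 + R)⁻¹_{kk'}| ≤ 2 r^{|k-k'|₁}`.
-/

open Finset Matrix

section WeightedBound

variable {ι 𝕜 : Type*} [Fintype ι] [NormedField 𝕜]

theorem norm_le_of_add_mulVec_eq {R : Matrix ι ι 𝕜} {w : ι → ℝ} {δ β : ℝ} {x b : ι → 𝕜}
    (hw : ∀ i, 0 < w i) (hδ : δ < 1) (hRw : ∀ i, ∑ j, ‖R i j‖ * w j ≤ δ * w i)
    (hb : ∀ i, ‖b i‖ ≤ β * w i) (hx : x + R *ᵥ x = b) (i : ι) :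
    ‖x i‖ ≤ β / (1 - δ) * w i := by
  obtain ⟨i₀, -, hi₀⟩ :=
    univ.exists_max_image (fun j => ‖x j‖ / w j) ⟨i, mem_univ i⟩
  set m := ‖x i₀‖ / w i₀
  have hm0 : 0 ≤ m := div_nonneg (norm_nonneg _) (hw i₀).le
  have hxm : ∀ j, ‖x j‖ ≤ m * w j := fun j => (div_le_iff₀ (hw j)).1 (hi₀ j (mem_univ j))
  have hx_i₀ : ‖x i₀‖ ≤ (β + δ * m) * w i₀ :=
    calc ‖x i₀‖ = ‖b i₀ - ∑ j, R i₀ j * x j‖ := by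
          rw [← hx]; simp [mulVec, dotProduct]
      _ ≤ ‖b i₀‖ + ∑ j, ‖R i₀ j‖ * ‖x j‖ := by
          refine (norm_sub_le _ _).trans (add_le_add le_rfl ?_)
          simpa only [norm_mul] using norm_sum_le univ fun j => R i₀ j * x j
      _ ≤ β * w i₀ + m * ∑ j, ‖R i₀ j‖ * w j := by
          rw [mul_sum]
          refine add_le_add (hb i₀) (sum_le_sum fun j _ => ?_)
          linarith [mul_le_mul_of_nonneg_left (hxm j) (norm_nonneg (R i₀ j))]
      _ ≤ (β + δ * m) * w i₀ := by nlinarith [hRw i₀]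
  have hm : m ≤ β / (1 - δ) := by
    rw [le_div_iff₀ (sub_pos.2 hδ)]
    linarith [(div_le_iff₀ (hw i₀)).2 hx_i₀]
  exact (hxm i).trans (mul_le_mul_of_nonneg_right hm (hw i).le)

theorem isUnit_one_add_and_norm_inv_le [DecidableEq ι] {R : Matrix ι ι 𝕜} {w : ι → ι → ℝ}
    {δ : ℝ} (hw : ∀ i k, 0 < w i k) (hw_diag : ∀ i, 1 ≤ w i i) (hδ : δ < 1)
    (hRw : ∀ i k, ∑ j, ‖R i j‖ * w j k ≤ δ * w i k) :
    IsUnit (1 + R) ∧ ∀ i k, ‖(1 + R)⁻¹ i k‖ ≤ w i k / (1 - δ) := by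
  have hunit : IsUnit (1 + R) := by
    rw [← mulVec_injective_iff_isUnit]
    intro x y hxy
    have hker : (x - y) + R *ᵥ (x - y) = 0 := by
      simpa [add_mulVec] using (show (1 + R) *ᵥ (x - y) = 0 by rw [mulVec_sub, hxy, sub_self])
    funext i
    have := norm_le_of_add_mulVec_eq (hw · i) hδ (hRw · i) (β := 0) (by simp) hker i
    simpa [sub_eq_zero] using this
  refine ⟨hunit, fun i k => ?_⟩
  have hcol : (fun j => (1 + R)⁻¹ j k) + R *ᵥ (fun j => (1 + R)⁻¹ j k) =
      fun j => (1 : Matrix ι ι 𝕜) j k := by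
    funext j
    have hinv := mul_nonsing_inv (1 + R) ((isUnit_iff_isUnit_det _).1 hunit)
    rw [add_mul, Matrix.one_mul] at hinv
    simpa [mul_apply, mulVec, dotProduct] using congrFun₂ hinv j k
  have hb : ∀ j, ‖(1 : Matrix ι ι 𝕜) j k‖ ≤ 1 * w j k := by
    intro j
    rcases eq_or_ne j k with rfl | hjk
    · simpa using hw_diag j
    · simpa [one_apply_ne hjk] using (hw j k).le
  simpa [div_eq_inv_mul] using norm_le_of_add_mulVec_eq (hw · k) hδ (hRw · k) hb hcol i

theorem sum_norm_mul_pow_le {R : Matrix ι ι 𝕜} {d : ι → ι → ℕ} {r ε S : ℝ}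
    (hr0 : 0 ≤ r) (hr1 : r ≤ 1) (hε : 0 ≤ ε) (hd : ∀ i j k, d i k ≤ d i j + d j k)
    (hS : ∀ i, ∑ j, r ^ d i j ≤ S) (hR : ∀ i j, ‖R i j‖ ≤ ε * r ^ (2 * d i j)) (i k : ι) :
    ∑ j, ‖R i j‖ * r ^ d j k ≤ ε * S * r ^ d i k :=
  calc ∑ j, ‖R i j‖ * r ^ d j k ≤ ∑ j, ε * r ^ d i j * r ^ d i k := by
        refine sum_le_sum fun j _ => ?_
        calc ‖R i j‖ * r ^ d j k ≤ ε * r ^ (2 * d i j) * r ^ d j k := by gcongr; exact hR i j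
          _ = ε * r ^ d i j * r ^ (d i j + d j k) := by ring
          _ ≤ ε * r ^ d i j * r ^ d i k :=
              mul_le_mul_of_nonneg_left (pow_le_pow_of_le_one hr0 hr1 (hd i j k)) (by positivity)
    _ = ε * (∑ j, r ^ d i j) * r ^ d i k := by rw [mul_sum, sum_mul]
    _ ≤ ε * S * r ^ d i k := by gcongr; exact hS i

end WeightedBound

section Lattice

def l1Norm (p : ℤ × ℤ) : ℕ := p.1.natAbs + p.2.natAbs

theorem l1Norm_sub_le_add (a b c : ℤ × ℤ) : l1Norm (a - c) ≤ l1Norm (a - b) + l1Norm (b - c) := by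
  have h₁ := Int.natAbs_add_le (a.1 - b.1) (b.1 - c.1)
  have h₂ := Int.natAbs_add_le (a.2 - b.2) (b.2 - c.2)
  simp only [sub_add_sub_cancel] at h₁ h₂
  simp only [l1Norm, Prod.fst_sub, Prod.snd_sub]
  omega

theorem natCast_l1Norm_sub (a b : ℤ × ℤ) :
    ((l1Norm (a - b) : ℕ) : ℝ) = ((|a.1 - b.1| + |a.2 - b.2| : ℤ) : ℝ) := by
  simp [l1Norm, Nat.cast_natAbs]

variable {r : ℝ}

theorem summable_pow_natAbs (hr0 : 0 ≤ r) (hr1 : r < 1) :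
    Summable fun m : ℤ => r ^ m.natAbs :=
  .of_nat_of_neg (by simpa using summable_geometric_of_lt_one hr0 hr1)
    (by simpa using summable_geometric_of_lt_one hr0 hr1)

theorem sum_pow_l1Norm_sub_le (hr0 : 0 ≤ r) (hr1 : r < 1) (Γ : Finset (ℤ × ℤ)) (k : ℤ × ℤ) :
    ∑ j ∈ Γ, r ^ l1Norm (k - j) ≤ (∑' m : ℤ, r ^ m.natAbs) ^ 2 := by
  have hf := summable_pow_natAbs hr0 hr1
  have hprod : Summable fun p : ℤ × ℤ => r ^ p.1.natAbs * r ^ p.2.natAbs :=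
    hf.mul_of_nonneg hf (fun _ => by positivity) (fun _ => by positivity)
  calc ∑ j ∈ Γ, r ^ l1Norm (k - j) = ∑ p ∈ Γ.image (k - ·), r ^ p.1.natAbs * r ^ p.2.natAbs := by
        rw [sum_image fun _ _ _ _ h => sub_right_injective h]
        simp [l1Norm, pow_add]
    _ ≤ ∑' p : ℤ × ℤ, r ^ p.1.natAbs * r ^ p.2.natAbs :=
        hprod.sum_le_tsum _ fun _ _ => by positivity
    _ = (∑' m : ℤ, r ^ m.natAbs) ^ 2 := by rw [sq, hf.tsum_mul_tsum hf hprod]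

variable {𝕜 : Type*} [NormedField 𝕜]

theorem sum_norm_mul_pow_l1Norm_le {Γ : Finset (ℤ × ℤ)} {R : Matrix Γ Γ 𝕜} {ε : ℝ}
    (hr0 : 0 ≤ r) (hr1 : r < 1) (hε : 0 ≤ ε)
    (hR : ∀ k k' : Γ, ‖R k k'‖ ≤ ε * r ^ (2 * l1Norm ((k : ℤ × ℤ) - k'))) (k k' : Γ) :
    ∑ j, ‖R k j‖ * r ^ l1Norm ((j : ℤ × ℤ) - k') ≤
      ε * (∑' m : ℤ, r ^ m.natAbs) ^ 2 * r ^ l1Norm ((k : ℤ × ℤ) - k') := by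
  have hrow (i : Γ) : ∑ j : Γ, r ^ l1Norm ((i : ℤ × ℤ) - j) ≤ (∑' m : ℤ, r ^ m.natAbs) ^ 2 :=
    (sum_coe_sort Γ fun j => r ^ l1Norm ((i : ℤ × ℤ) - j)).trans_le
      (sum_pow_l1Norm_sub_le hr0 hr1 Γ i)
  exact sum_norm_mul_pow_le (d := fun i j : Γ => l1Norm ((i : ℤ × ℤ) - j)) hr0 hr1.le hε
    (fun i j k => l1Norm_sub_le_add i j k) hrow hR k k'

end Lattice

theorem rpow_natCast_div_four {q : ℝ} (hq : 0 ≤ q) (n : ℕ) :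
    q ^ ((n : ℝ) / 4) = (q ^ (1 / 4 : ℝ)) ^ n := by
  rw [← Real.rpow_mul_natCast hq]
  ring_nf

theorem rpow_natCast_div_two {q : ℝ} (hq : 0 ≤ q) (n : ℕ) :
    q ^ ((n : ℝ) / 2) = (q ^ (1 / 4 : ℝ)) ^ (2 * n) := by
  rw [← rpow_natCast_div_four hq]
  push_cast
  ring_nf

/-- uniform invertibility with exponential off-diagonal decay of the
inverse, for matrices indexed by a finite subset of `ℤ²` whose entries decay like
`ε·q^{|k−k'|₁/2}`. -/
theorem neumann_series_decay (q : ℝ) (hq : q ∈ Set.Ioo (0 : ℝ) 1) :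
    ∃ ε₀ C : ℝ, 0 < ε₀ ∧ 0 < C ∧
      ∀ (Γ : Finset (ℤ × ℤ)) (ε : ℝ) (R : Matrix Γ Γ ℂ),
        ε ≤ ε₀ →
        (∀ k k' : Γ, ‖R k k'‖
          ≤ ε * q ^ (((|(k : ℤ × ℤ).1 - (k' : ℤ × ℤ).1| + |(k : ℤ × ℤ).2 - (k' : ℤ × ℤ).2| : ℤ) : ℝ) / 2)) →
        IsUnit (1 + R) ∧
        ∀ k k' : Γ, ‖(1 + R)⁻¹ k k'‖
          ≤ C * q ^ (((|(k : ℤ × ℤ).1 - (k' : ℤ × ℤ).1| + |(k : ℤ × ℤ).2 - (k' : ℤ × ℤ).2| : ℤ) : ℝ) / 4) := by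
  obtain ⟨hq0, hq1⟩ := hq
  set r := q ^ (1 / 4 : ℝ)
  have hr0 : 0 < r := Real.rpow_pos_of_pos hq0 _
  have hr1 : r < 1 := Real.rpow_lt_one hq0.le hq1 (by norm_num)
  set S := (∑' m : ℤ, r ^ m.natAbs) ^ 2
  have hS : 0 < S :=
    pow_pos ((summable_pow_natAbs hr0.le hr1).tsum_pos (fun _ => by positivity) 0 (by simp)) 2
  refine ⟨1 / (2 * S), 2, by positivity, two_pos, fun Γ ε R hε hR => ?_⟩
  set d : Γ → Γ → ℕ := fun k k' => l1Norm ((k : ℤ × ℤ) - k')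
  -- `ε < 0` forces `Γ = ∅`; passing to `max ε 0` avoids that case split.
  have hR' (k k' : Γ) : ‖R k k'‖ ≤ max ε 0 * r ^ (2 * d k k') := by
    have h := hR k k'
    rw [← natCast_l1Norm_sub, rpow_natCast_div_two hq0.le] at h
    exact h.trans (by gcongr; exact le_max_left _ _)
  have hεS : max ε 0 * S ≤ 1 / 2 := by
    have : max ε 0 ≤ 1 / (2 * S) := max_le hε (by positivity)
    calc max ε 0 * S ≤ 1 / (2 * S) * S := by gcongr
      _ = 1 / 2 := by field_simp
  have hcontract (k k' : Γ) : ∑ j, ‖R k j‖ * r ^ d j k' ≤ 1 / 2 * r ^ d k k' :=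
    (sum_norm_mul_pow_l1Norm_le hr0.le hr1 (le_max_right _ _) hR' k k').trans
      (mul_le_mul_of_nonneg_right hεS (by positivity))
  obtain ⟨hunit, hinv⟩ := isUnit_one_add_and_norm_inv_le (fun k k' => pow_pos hr0 (d k k'))
    (fun k => by simp [d, l1Norm]) (by norm_num) hcontract
  refine ⟨hunit, fun k k' => ?_⟩
  rw [← natCast_l1Norm_sub, rpow_natCast_div_four hq0.le]
  exact (hinv k k').trans_eq (by ring)
end

section
/- Let Γ be a finite subset of ℤ², let 0 < q < 1/2, and let Q = (Q_{k,k'})_{k,k'∈Γ} be a complex matrix such that Q_{k,k'} = 0 unless k' − k ∈ {(2,0), (0,2)}, and |Q_{k,k'}| ≤ q for all k, k'. Then I + Q is invertible (indeed Q is nilpotent), (I + Q)^{−1}_{k,k'} = 0 unless k' − k = (2a, 2b) for some integers a, b ≥ 0, and |(I + Q)^{−1}_{k,k'}| ≤ (2q)^{|k−k'|₁/2} for all k ≠ k', with diagonal entries equal to 1. -/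
/-!
Put `P = -Q`, so that `(1 + Q)⁻¹ = (1 - P)⁻¹ = ∑ₙ Pⁿ`. A nonzero entry `(Pⁿ) k k'` comes from a
path of `n` steps `2e₁` or `2e₂`, hence `k' - k = (2a, 2b)` with `a + b = n`. The height
`k₁ + k₂` thus rises by `2n`, which makes `P` nilpotent, and for fixed `k, k'` only the power
`n = |k - k'|₁ / 2` contributes to the Neumann series. Every row of `P` has at most two nonzero
entries, each of norm at most `q`, so the entries of `Pⁿ` are bounded by `(2q)ⁿ`.
-/

open Finset

namespace Matrix

variable {ι R G : Type*} [Fintype ι] [AddCommMonoid G] {p : ι → G} {u v : G}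

def SupportedOnSteps [Zero R] (p : ι → G) (u v : G) (Q : Matrix ι ι R) : Prop :=
  ∀ i j, Q i j ≠ 0 → p j = p i + u ∨ p j = p i + v

theorem SupportedOnSteps.card_filter_apply_ne_zero_le_two [Zero R] [DecidableEq R]
    [DecidableEq G] {Q : Matrix ι ι R} (hQ : Q.SupportedOnSteps p u v)
    (hp : Function.Injective p) (i : ι) : #{j | Q i j ≠ 0} ≤ 2 :=
  calc #{j | Q i j ≠ 0} ≤ #{p i + u, p i + v} :=
        card_le_card_of_injOn p (fun j hj => by simpa using hQ i j (mem_filter.mp hj).2)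
          hp.injOn
    _ ≤ 2 := card_le_two

variable [DecidableEq ι]

theorem SupportedOnSteps.exists_nsmul_of_pow_apply_ne_zero [Semiring R] {Q : Matrix ι ι R}
    (hQ : Q.SupportedOnSteps p u v) :
    ∀ n i j, (Q ^ n) i j ≠ 0 → ∃ a b : ℕ, a + b = n ∧ p j = p i + a • u + b • v
  | 0, i, j, h => by
    obtain rfl : i = j := by_contra fun hij => h (by rw [pow_zero, one_apply_ne hij])
    exact ⟨0, 0, rfl, by simp⟩
  | n + 1, i, j, h => by
    rw [pow_succ', mul_apply] at h
    obtain ⟨l, -, hl⟩ := exists_ne_zero_of_sum_ne_zero h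
    obtain ⟨a, b, rfl, hj⟩ := hQ.exists_nsmul_of_pow_apply_ne_zero n l j (right_ne_zero_of_mul hl)
    rcases hQ i l (left_ne_zero_of_mul hl) with hl' | hl'
    · exact ⟨a + 1, b, by ring, by rw [hj, hl', add_nsmul, one_nsmul]; abel⟩
    · exact ⟨a, b + 1, by ring, by rw [hj, hl', add_nsmul, one_nsmul]; abel⟩

theorem norm_pow_apply_le [NormedRing R] [NormOneClass R] [DecidableEq R] {Q : Matrix ι ι R}
    {r : ℕ} {q : ℝ} (hrow : ∀ i, #{j | Q i j ≠ 0} ≤ r) (hbd : ∀ i j, ‖Q i j‖ ≤ q) :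
    ∀ n i j, ‖(Q ^ n) i j‖ ≤ (r * q) ^ n
  | 0, i, j => by rw [pow_zero, pow_zero, one_apply]; split_ifs <;> simp
  | n + 1, i, j => by
    have hq : 0 ≤ q := (norm_nonneg _).trans (hbd i i)
    calc ‖(Q ^ (n + 1)) i j‖ = ‖∑ l with Q i l ≠ 0, Q i l * (Q ^ n) l j‖ := by
          rw [pow_succ', mul_apply, sum_filter_of_ne fun l _ hl => left_ne_zero_of_mul hl]
      _ ≤ ∑ l with Q i l ≠ 0, q * (r * q) ^ n :=
          (norm_sum_le _ _).trans <| sum_le_sum fun l _ => (norm_mul_le _ _).trans <|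
            mul_le_mul (hbd i l) (norm_pow_apply_le hrow hbd n l j) (norm_nonneg _) hq
      _ ≤ r * (q * (r * q) ^ n) := by
          rw [sum_const, nsmul_eq_mul]; gcongr; exact_mod_cast hrow i
      _ = (r * q) ^ (n + 1) := by ring

theorem isNilpotent_of_pow_apply_ne_zero [Semiring R] {Q : Matrix ι ι R} (h : ι → ℤ)
    (hQ : ∀ (n : ℕ) i j, (Q ^ n) i j ≠ 0 → h i + n ≤ h j) : IsNilpotent Q := by
  obtain ⟨M, hM⟩ := (Set.finite_range h).bddAbove
  obtain ⟨m, hm⟩ := (Set.finite_range h).bddBelow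
  refine ⟨(M - m).toNat + 1, ext fun i j => by_contra fun hij => ?_⟩
  have := hQ _ i j hij
  have := hM (Set.mem_range_self j)
  have := hm (Set.mem_range_self i)
  omega

section Inverse

variable [CommRing R] {P : Matrix ι ι R}

theorem inv_one_sub_eq_sum_pow {N : ℕ} (hN : P ^ N = 0) :
    (1 - P)⁻¹ = ∑ m ∈ range N, P ^ m :=
  inv_eq_right_inv (by rw [mul_neg_geom_sum, hN, sub_zero])

theorem exists_pow_apply_ne_zero_of_inv_one_sub_apply_ne_zero (hP : IsNilpotent P) {i j : ι}
    (h : (1 - P)⁻¹ i j ≠ 0) : ∃ n, (P ^ n) i j ≠ 0 := by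
  obtain ⟨N, hN⟩ := hP
  rw [inv_one_sub_eq_sum_pow hN, sum_apply] at h
  obtain ⟨n, -, hn⟩ := exists_ne_zero_of_sum_ne_zero h
  exact ⟨n, hn⟩

theorem inv_one_sub_apply_eq_pow_apply (hP : IsNilpotent P) {i j : ι} {n : ℕ}
    (huniq : ∀ m, (P ^ m) i j ≠ 0 → m = n) : (1 - P)⁻¹ i j = (P ^ n) i j := by
  obtain ⟨N, hN⟩ := hP
  rw [inv_one_sub_eq_sum_pow hN, sum_apply]
  refine sum_eq_single n (fun m _ hm => not_not.mp (mt (huniq m) hm)) fun hn => ?_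
  rw [pow_eq_zero_of_le (by simpa using hn) hN, zero_apply]

end Inverse

namespace SupportedOnSteps

variable [Semiring R] {Γ : Finset (ℤ × ℤ)} {P : Matrix Γ Γ R}

theorem exists_two_mul_of_pow_apply_ne_zero
    (hP : P.SupportedOnSteps ((↑) : Γ → ℤ × ℤ) (2, 0) (0, 2))
    {n : ℕ} {k k' : Γ} (h : (P ^ n) k k' ≠ 0) :
    ∃ a b : ℕ, a + b = n ∧ (k' : ℤ × ℤ).1 - (k : ℤ × ℤ).1 = 2 * a ∧
      (k' : ℤ × ℤ).2 - (k : ℤ × ℤ).2 = 2 * b := by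
  obtain ⟨a, b, hab, hk'⟩ := hP.exists_nsmul_of_pow_apply_ne_zero n k k' h
  refine ⟨a, b, hab, ?_, ?_⟩ <;> simp [hk'] <;> ring

theorem abs_sub_add_abs_sub_eq_of_pow_apply_ne_zero
    (hP : P.SupportedOnSteps ((↑) : Γ → ℤ × ℤ) (2, 0) (0, 2))
    {n : ℕ} {k k' : Γ} (h : (P ^ n) k k' ≠ 0) :
    |(k : ℤ × ℤ).1 - (k' : ℤ × ℤ).1| + |(k : ℤ × ℤ).2 - (k' : ℤ × ℤ).2| = 2 * n := by
  obtain ⟨a, b, rfl, ha, hb⟩ := hP.exists_two_mul_of_pow_apply_ne_zero h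
  rw [abs_of_nonpos (by omega), abs_of_nonpos (by omega)]
  omega

theorem eq_of_pow_apply_ne_zero (hP : P.SupportedOnSteps ((↑) : Γ → ℤ × ℤ) (2, 0) (0, 2))
    {m n : ℕ} {k k' : Γ} (hm : (P ^ m) k k' ≠ 0) (hn : (P ^ n) k k' ≠ 0) : m = n := by
  have := hP.abs_sub_add_abs_sub_eq_of_pow_apply_ne_zero hm
  have := hP.abs_sub_add_abs_sub_eq_of_pow_apply_ne_zero hn
  omega

theorem isNilpotent (hP : P.SupportedOnSteps ((↑) : Γ → ℤ × ℤ) (2, 0) (0, 2)) :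
    IsNilpotent P :=
  isNilpotent_of_pow_apply_ne_zero (fun k => (k : ℤ × ℤ).1 + (k : ℤ × ℤ).2) fun n k k' h => by
    obtain ⟨a, b, rfl, ha, hb⟩ := hP.exists_two_mul_of_pow_apply_ne_zero h
    push_cast
    omega

end SupportedOnSteps

end Matrix

open Matrix

theorem nilpotent_inverse_decay_general (Γ : Finset (ℤ × ℤ)) (q : ℝ) (Q : Matrix Γ Γ ℂ)
    (hsupp : ∀ k k' : Γ, Q k k' ≠ 0 →
      ((k' : ℤ × ℤ).1 - (k : ℤ × ℤ).1, (k' : ℤ × ℤ).2 - (k : ℤ × ℤ).2) = ((2 : ℤ), (0 : ℤ)) ∨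
      ((k' : ℤ × ℤ).1 - (k : ℤ × ℤ).1, (k' : ℤ × ℤ).2 - (k : ℤ × ℤ).2) = ((0 : ℤ), (2 : ℤ)))
    (hbd : ∀ k k' : Γ, ‖Q k k'‖ ≤ q) :
    IsNilpotent Q ∧
    IsUnit (1 + Q) ∧
    (∀ k k' : Γ, (1 + Q)⁻¹ k k' ≠ 0 →
      ∃ a b : ℕ, (k' : ℤ × ℤ).1 - (k : ℤ × ℤ).1 = 2 * (a : ℤ) ∧
        (k' : ℤ × ℤ).2 - (k : ℤ × ℤ).2 = 2 * (b : ℤ)) ∧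
    (∀ k : Γ, (1 + Q)⁻¹ k k = 1) ∧
    (∀ k k' : Γ, k ≠ k' → ‖(1 + Q)⁻¹ k k'‖
      ≤ (2 * q) ^ (((|(k : ℤ × ℤ).1 - (k' : ℤ × ℤ).1| + |(k : ℤ × ℤ).2 - (k' : ℤ × ℤ).2| : ℤ) : ℝ) / 2)) := by
  have hP : (-Q).SupportedOnSteps ((↑) : Γ → ℤ × ℤ) (2, 0) (0, 2) := fun k j h => by
    rcases hsupp k j (neg_ne_zero.mp h) with h | h <;> simp only [Prod.mk.injEq] at h <;>
      [left; right] <;> ext <;> simp <;> omega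
  have hdecay : ∀ n (k k' : Γ), ‖((-Q) ^ n) k k'‖ ≤ (2 * q) ^ n := by
    simpa using norm_pow_apply_le (hP.card_filter_apply_ne_zero_le_two Subtype.val_injective)
      (by simpa using hbd)
  have hnil : IsNilpotent (-Q) := hP.isNilpotent
  rw [← sub_neg_eq_add]
  refine ⟨isNilpotent_neg_iff.mp hnil, hnil.isUnit_one_sub,
    fun k k' h => ?_, fun k => ?_, fun k k' _ => ?_⟩
  · obtain ⟨n, hn⟩ := exists_pow_apply_ne_zero_of_inv_one_sub_apply_ne_zero hnil h
    obtain ⟨a, b, -, ha, hb⟩ := hP.exists_two_mul_of_pow_apply_ne_zero hn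
    exact ⟨a, b, ha, hb⟩
  · rw [inv_one_sub_apply_eq_pow_apply hnil fun m hm =>
      hP.eq_of_pow_apply_ne_zero hm (n := 0) (by simp)]
    simp
  · by_cases h : (1 - -Q)⁻¹ k k' = 0
    · rw [h, norm_zero]
      exact Real.rpow_nonneg (by linarith [(norm_nonneg _).trans (hbd k k)]) _
    obtain ⟨n, hn⟩ := exists_pow_apply_ne_zero_of_inv_one_sub_apply_ne_zero hnil h
    rw [inv_one_sub_apply_eq_pow_apply hnil fun m hm => hP.eq_of_pow_apply_ne_zero hm hn,
      hP.abs_sub_add_abs_sub_eq_of_pow_apply_ne_zero hn, Int.cast_mul, Int.cast_ofNat,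
      Int.cast_natCast, mul_div_cancel_left₀ _ two_ne_zero, Real.rpow_natCast]
    exact hdecay n k k'

/-- for a matrix `Q` supported on the shifts `2e₁, 2e₂` of `ℤ²` with
entries bounded by `q < 1/2`, `Q` is nilpotent, `I + Q` is invertible, the inverse is
supported on nonnegative even shifts, has unit diagonal, and its off-diagonal entries
are bounded by `(2q)^{|k−k'|₁/2}`. -/
theorem nilpotent_inverse_decay (Γ : Finset (ℤ × ℤ)) (q : ℝ) (hq0 : 0 < q)
    (hq : q < 1 / 2) (Q : Matrix Γ Γ ℂ)
    (hsupp : ∀ k k' : Γ, Q k k' ≠ 0 →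
      ((k' : ℤ × ℤ).1 - (k : ℤ × ℤ).1, (k' : ℤ × ℤ).2 - (k : ℤ × ℤ).2) = ((2 : ℤ), (0 : ℤ)) ∨
      ((k' : ℤ × ℤ).1 - (k : ℤ × ℤ).1, (k' : ℤ × ℤ).2 - (k : ℤ × ℤ).2) = ((0 : ℤ), (2 : ℤ)))
    (hbd : ∀ k k' : Γ, ‖Q k k'‖ ≤ q) :
    IsNilpotent Q ∧
    IsUnit (1 + Q) ∧
    (∀ k k' : Γ, (1 + Q)⁻¹ k k' ≠ 0 →
      ∃ a b : ℕ, (k' : ℤ × ℤ).1 - (k : ℤ × ℤ).1 = 2 * (a : ℤ) ∧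
        (k' : ℤ × ℤ).2 - (k : ℤ × ℤ).2 = 2 * (b : ℤ)) ∧
    (∀ k : Γ, (1 + Q)⁻¹ k k = 1) ∧
    (∀ k k' : Γ, k ≠ k' → ‖(1 + Q)⁻¹ k k'‖
      ≤ (2 * q) ^ (((|(k : ℤ × ℤ).1 - (k' : ℤ × ℤ).1| + |(k : ℤ × ℤ).2 - (k' : ℤ × ℤ).2| : ℤ) : ℝ) / 2)) :=
  nilpotent_inverse_decay_general Γ q Q hsupp hbd
end
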